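/- For M as in the regular representation (M = Σ x_n A^n with A the companion matrix of a monic polynomial with distinct nonzero roots α_1,...,α_m), the ratio (M^n)_{m,m-1} / (M^n)_{1,m} is the same constant, namely 1/((-1)^{m-1} ∏ α_h), for every n ≥ 1 for which the denominator is nonzero. -/

import Mathlib

/-!
Since `M` is a polynomial in the companion matrix `A`, so is `N = Mⁿ`, and `N` commutes with
`A`. Comparing the `(1, m-1)` entries of `A * N` and `N * A` gives `N₁ₘ = c₀ * Nₘ,ₘ₋₁`, where
`c₀` is the top right entry of `A`. By Vieta's formula for `Xᵐ - ∑ cₛ Xˢ = ∏ (X - αₕ)`, this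
constant is `(-1)^(m-1) ∏ αₕ`.
-/

open Matrix Polynomial

section Vieta

variable {R : Type*} [CommRing R] [IsDomain R] {m : ℕ}

theorem X_pow_sub_sum_eq_prod_X_sub_C (c α : Fin m → R) (hα : Function.Injective α)
    (hroot : ∀ k, α k ^ m = ∑ s : Fin m, c s * α k ^ (s : ℕ)) :
    X ^ m - ∑ s : Fin m, C (c s) * X ^ (s : ℕ) = ∏ k, (X - C (α k)) := by
  have hmonic : (X ^ m - ∑ s : Fin m, C (c s) * X ^ (s : ℕ)).Monic :=
    monic_X_pow_sub (degree_sum_fin_lt c)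
  have hdeg : (X ^ m - ∑ s : Fin m, C (c s) * X ^ (s : ℕ)).degree = (m : WithBot ℕ) := by
    rw [degree_sub_eq_left_of_degree_lt] <;> simp [degree_sum_fin_lt c]
  refine eq_of_degree_sub_lt_of_eval_index_eq Finset.univ hα.injOn ?_ fun k _ => ?_
  · rw [Finset.card_univ, Fintype.card_fin, ← hdeg]
    refine degree_sub_lt_left ?_ hmonic.ne_zero ?_
    · simp [hdeg, degree_prod]
    · rw [hmonic.leadingCoeff,
        (monic_prod_of_monic _ _ fun k _ => monic_X_sub_C (α k)).leadingCoeff]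
  · simp [eval_finsetSum, eval_prod, Finset.prod_eq_zero (Finset.mem_univ k), hroot k]

theorem coeff_zero_eq_of_forall_root (hm : 0 < m) (c α : Fin m → R) (hα : Function.Injective α)
    (hroot : ∀ k, α k ^ m = ∑ s : Fin m, c s * α k ^ (s : ℕ)) :
    c ⟨0, hm⟩ = (-1) ^ (m - 1) * ∏ k, α k := by
  have h := congrArg (eval 0) (X_pow_sub_sum_eq_prod_X_sub_C c α hα hroot)
  obtain ⟨m, rfl⟩ : ∃ k, m = k + 1 := ⟨m - 1, by omega⟩
  simpa [eval_finsetSum, eval_prod, Finset.prod_neg, Fin.sum_univ_succ, pow_succ] using h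

end Vieta

/-- The companion matrix of `Xᵐ - ∑ₛ cₛ Xˢ`. -/
def companion {R : Type*} [Zero R] [One R] {m : ℕ} (c : Fin m → R) :
    Matrix (Fin m) (Fin m) R :=
  of fun i j => if (j : ℕ) = m - 1 then c i else if (i : ℕ) = (j : ℕ) + 1 then 1 else 0

section Companion

variable {R : Type*} [Semiring R] {m : ℕ}

theorem companion_mul_apply_zero (c : Fin m → R) (N : Matrix (Fin m) (Fin m) R) (hm : 0 < m)
    (j : Fin m) : (companion c * N) ⟨0, hm⟩ j = c ⟨0, hm⟩ * N ⟨m - 1, by omega⟩ j := by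
  rw [mul_apply, Finset.sum_eq_single_of_mem ⟨m - 1, by omega⟩ (Finset.mem_univ _)]
  · simp [companion]
  · intro k _ hk
    have : (k : ℕ) ≠ m - 1 := fun h => hk (Fin.ext h)
    simp [companion, this]

theorem mul_companion_apply_of_lt (c : Fin m → R) (N : Matrix (Fin m) (Fin m) R) (i j : Fin m)
    (hj : (j : ℕ) + 1 < m) : (N * companion c) i j = N i ⟨j + 1, hj⟩ := by
  rw [mul_apply, Finset.sum_eq_single_of_mem ⟨j + 1, hj⟩ (Finset.mem_univ _)]
  · simp [companion, show (j : ℕ) ≠ m - 1 by omega]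
  · intro k _ hk
    have : (k : ℕ) ≠ j + 1 := fun h => hk (Fin.ext h)
    simp [companion, show (j : ℕ) ≠ m - 1 by omega, this]

theorem apply_zero_last_eq_of_commute_companion {c : Fin m → R} {N : Matrix (Fin m) (Fin m) R}
    (hm : 1 < m) (hN : Commute (companion c) N) :
    N ⟨0, by omega⟩ ⟨m - 1, by omega⟩ =
      c ⟨0, by omega⟩ * N ⟨m - 1, by omega⟩ ⟨m - 2, by omega⟩ := by
  have h := congrFun (congrFun hN.eq ⟨0, by omega⟩) ⟨m - 2, by omega⟩
  rw [companion_mul_apply_zero, mul_companion_apply_of_lt _ _ _ _ (by simp; omega)] at h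
  convert h.symm using 3
  dsimp only
  omega

end Companion

/-- The ratio `(Mⁿ)_{m,m-1} / (Mⁿ)_{1,m}` is the constant `1/((-1)^{m-1} ∏ αₕ)`
for every `n ≥ 1` for which the denominator is nonzero. -/
theorem regular_rep_constant_ratio (m : ℕ) (hm : 2 ≤ m)
    (u : Fin m → ℂ) (α : Fin m → ℂ) (hdist : Function.Injective α)
    (hroot : ∀ k : Fin m, α k ^ m = ∑ s : Fin m, u s.rev * α k ^ (s : ℕ))
    (A : Matrix (Fin m) (Fin m) ℂ)
    (hA : ∀ i j : Fin m, A i j =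
      if (j : ℕ) = m - 1 then u i.rev
      else if (i : ℕ) = (j : ℕ) + 1 then 1 else 0)
    (x : Fin m → ℂ) (M : Matrix (Fin m) (Fin m) ℂ)
    (hM : M = ∑ n : Fin m, x n • A ^ (n : ℕ))
    (n : ℕ)
    (hden : (M ^ n) ⟨0, by omega⟩ ⟨m - 1, by omega⟩ ≠ 0) :
    (M ^ n) ⟨m - 1, by omega⟩ ⟨m - 2, by omega⟩ /
      (M ^ n) ⟨0, by omega⟩ ⟨m - 1, by omega⟩ =
      1 / ((-1) ^ (m - 1) * ∏ h : Fin m, α h) := by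
  have hA_eq : A = companion fun s => u s.rev := by
    ext i j
    simp [hA, companion]
  have hcomm : Commute A (M ^ n) := by
    rw [hM]
    refine (Commute.sum_right _ _ _ fun i _ => ?_).pow_right n
    exact ((Commute.refl A).pow_right _).smul_right _
  rw [hA_eq] at hcomm
  have hcorner := apply_zero_last_eq_of_commute_companion hm hcomm
  have hc := coeff_zero_eq_of_forall_root (by omega) (fun s => u s.rev) α hdist hroot
  rw [hcorner] at hden ⊢
  rw [div_mul_cancel_right₀ (right_ne_zero_of_mul hden), hc, one_div]
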